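/- Let k ≥ 2 be an integer, q = p^r with p prime and r ≥ 1, and let β_0, …, β_{k−1} ∈ F_q be arbitrary. The sequence {S_{F_q}(Σ_{j=0}^{k−1} β_j σ_{n,k−j})}_{n≥k} satisfies a homogeneous linear recurrence with integer coefficients: there exist an integer d ≥ 1 and integers c_0, …, c_{d−1} such that the exponential sum at n equals c_{d−1} times the sum at n−1 plus ⋯ plus c_0 times the sum at n−d, for all n ≥ k + d. -/
import Mathlib


open Finset

/-- The exponential sum over `F_q` of a function `G : F_qⁿ → F_q`:
`S_{F_q}(G) = ∑_{x ∈ F_qⁿ} e^{(2πi/p)·Tr_{F_q/F_p}(G(x))}`. -/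
noncomputable def expSumGF (p : ℕ) (F : Type) [Field F] [Fintype F] [Algebra (ZMod p) F]
    (n : ℕ) (G : (Fin n → F) → F) : ℂ :=
  ∑ x : Fin n → F,
    Complex.exp (2 * Real.pi * Complex.I * ((Algebra.trace (ZMod p) F (G x)).val : ℂ) / p)

/-- The elementary symmetric polynomial `σ_{n,k}` in `n` variables of degree `k`,
viewed as a function `F_qⁿ → F_q`. -/
def esymFun {F : Type} [CommRing F] (k n : ℕ) (x : Fin n → F) : F :=
  ∑ s ∈ Finset.powersetCard k (Finset.univ : Finset (Fin n)), ∏ i ∈ s, x i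

lemma multiset_esymm_cons {R : Type*} [CommSemiring R] (a : R) (s : Multiset R) (j : ℕ) :
    (a ::ₘ s).esymm (j + 1) = s.esymm (j + 1) + a * s.esymm j := by
  rw [Multiset.esymm, Multiset.powersetCard_cons, Multiset.map_add, Multiset.sum_add,
    Multiset.map_map]
  congr 1
  rw [Multiset.esymm, ← Multiset.sum_map_mul_left]
  exact congrArg _ (Multiset.map_congr rfl fun t _ => by simp)

lemma esymFun_eq_esymm {F : Type} [CommRing F] (j n : ℕ) (x : Fin n → F) :
    esymFun j n x = ((Finset.univ.val.map x).esymm j) :=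
  (Finset.esymm_map_val x _ j).symm

lemma esymFun_zero {F : Type} [CommRing F] (n : ℕ) (x : Fin n → F) :
    esymFun 0 n x = 1 := by
  simp [esymFun]

lemma map_snoc_univ {F : Type} [CommRing F] (n : ℕ) (x : Fin n → F) (y : F) :
    (Finset.univ.val.map (Fin.snoc x y : Fin (n+1) → F)) = y ::ₘ Finset.univ.val.map x := by
  rw [Fin.univ_castSuccEmb]
  simp only [Finset.cons_val, Multiset.map_cons, Fin.snoc_last, Finset.map_val,
    Multiset.map_map]
  congr 1
  exact Multiset.map_congr rfl fun i _ => by simp [Fin.snoc_castSucc]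

lemma esymFun_snoc {F : Type} [CommRing F] (j n : ℕ) (x : Fin n → F) (y : F) :
    esymFun (j + 1) (n + 1) (Fin.snoc x y) = esymFun (j + 1) n x + y * esymFun j n x := by
  rw [esymFun_eq_esymm, esymFun_eq_esymm, esymFun_eq_esymm, map_snoc_univ,
    multiset_esymm_cons]

/-- Let `k ≥ 2`, `q = p^r` with `p` prime and `r ≥ 1`, and let
`β₀, …, β_{k−1} ∈ F_q` be arbitrary.  The sequence
`{S_{F_q}(∑_{j=0}^{k−1} β_j σ_{n,k−j})}` satisfies a homogeneous linear recurrence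
with integer coefficients: there exist `d ≥ 1` and integers `c₀, …, c_{d−1}` such
that the exponential sum at `n` equals
`c_{d−1}·(sum at n−1) + ⋯ + c₀·(sum at n−d)` for all `n ≥ k + d`. -/
theorem esym_combination_expSum_linear_recurrence_GF (p r : ℕ) (hp : p.Prime) (hr : 1 ≤ r)
    {F : Type} [Field F] [Fintype F] [Algebra (ZMod p) F] (hq : Fintype.card F = p ^ r)
    (k : ℕ) (hk : 2 ≤ k) (β : ℕ → F) :
    ∃ d : ℕ, 1 ≤ d ∧ ∃ c : ℕ → ℤ, ∀ n : ℕ, k + d ≤ n →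
      expSumGF p F n (fun x => ∑ j ∈ Finset.range k, β j * esymFun (k - j) n x) =
        ∑ i ∈ Finset.range d, (c i : ℂ) *
          expSumGF p F (n - d + i)
            (fun x => ∑ j ∈ Finset.range k, β j * esymFun (k - j) (n - d + i) x) := by
  classical
  -- the state of a vector: values of e_1, ..., e_k
  set st : ∀ n : ℕ, (Fin n → F) → (Fin k → F) :=
    fun n x i => esymFun ((i : ℕ) + 1) n x with hst
  -- transition on states when appending a coordinate
  set step : F → (Fin k → F) → (Fin k → F) :=
    fun y t i => t i + y * (if h : (i : ℕ) = 0 then 1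
      else t ⟨(i : ℕ) - 1, lt_of_le_of_lt (Nat.sub_le _ _) i.2⟩) with hstep
  have hstepkey : ∀ (n : ℕ) (x : Fin n → F) (y : F),
      st (n + 1) (Fin.snoc x y) = step y (st n x) := by
    intro n x y
    funext i
    simp only [hst, hstep]
    rw [esymFun_snoc]
    congr 1
    congr 1
    by_cases h : (i : ℕ) = 0
    · rw [dif_pos h, h, esymFun_zero]
    · rw [dif_neg h]
      congr 1
      omega
  -- the counting vector
  set v : ∀ n : ℕ, (Fin k → F) → ℂ :=
    fun n s => ∑ x : Fin n → F, if st n x = s then (1 : ℂ) else 0 with hv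
  -- the integer transition matrix
  set Mz : Matrix (Fin k → F) (Fin k → F) ℤ :=
    Matrix.of (fun s t => ∑ y : F, if step y t = s then (1 : ℤ) else 0) with hMz
  set Mc : Matrix (Fin k → F) (Fin k → F) ℂ := Mz.map (Int.cast) with hMc
  have hMcapp : ∀ s t, Mc s t = ∑ y : F, if step y t = s then (1 : ℂ) else 0 := by
    intro s t
    simp [hMc, hMz, Matrix.map_apply]
  -- one-step recurrence for v
  have hvstep : ∀ n : ℕ, v (n + 1) = Mc.mulVec (v n) := by
    intro n
    funext s
    have lhs : v (n + 1) s
        = ∑ y : F, ∑ x : Fin n → F, if step y (st n x) = s then (1 : ℂ) else 0 := by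
      show (∑ x' : Fin (n+1) → F, if st (n+1) x' = s then (1:ℂ) else 0) = _
      rw [← Equiv.sum_comp (Fin.snocEquiv (fun _ => F))
        (fun x' : Fin (n+1) → F => if st (n+1) x' = s then (1:ℂ) else 0),
        Fintype.sum_prod_type]
      refine Finset.sum_congr rfl fun y _ => Finset.sum_congr rfl fun x _ => ?_
      show (if st (n+1) (Fin.snoc x y) = s then (1:ℂ) else 0) = _
      rw [hstepkey]
    have rhs1 : ∀ t, Mc s t * v n t
        = ∑ y : F, ∑ x : Fin n → F,
            if st n x = t then (if step y t = s then (1 : ℂ) else 0) else 0 := by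
      intro t
      rw [hMcapp]
      show _ * (∑ x : Fin n → F, if st n x = t then (1:ℂ) else 0) = _
      rw [Finset.sum_mul]
      refine Finset.sum_congr rfl fun y _ => ?_
      rw [Finset.mul_sum]
      refine Finset.sum_congr rfl fun x _ => ?_
      by_cases h1 : st n x = t <;> by_cases h2 : step y t = s <;> simp [h1, h2]
    have rhs : Mc.mulVec (v n) s
        = ∑ y : F, ∑ x : Fin n → F, if step y (st n x) = s then (1 : ℂ) else 0 := by
      show (∑ t, Mc s t * v n t) = _
      calc (∑ t, Mc s t * v n t)
          = ∑ t, ∑ y : F, ∑ x : Fin n → F,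
              if st n x = t then (if step y t = s then (1 : ℂ) else 0) else 0 :=
            Finset.sum_congr rfl fun t _ => rhs1 t
        _ = ∑ y : F, ∑ t, ∑ x : Fin n → F,
              if st n x = t then (if step y t = s then (1 : ℂ) else 0) else 0 :=
            Finset.sum_comm
        _ = ∑ y : F, ∑ x : Fin n → F, ∑ t,
              if st n x = t then (if step y t = s then (1 : ℂ) else 0) else 0 :=
            Finset.sum_congr rfl fun y _ => Finset.sum_comm
        _ = ∑ y : F, ∑ x : Fin n → F, if step y (st n x) = s then (1 : ℂ) else 0 := by
            refine Finset.sum_congr rfl fun y _ => Finset.sum_congr rfl fun x _ => ?_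
            rw [Finset.sum_ite_eq Finset.univ (st n x)
              (fun t => if step y t = s then (1:ℂ) else 0)]
            simp
    rw [lhs, rhs]
  -- iterate
  have hvpow : ∀ (m j : ℕ), v (m + j) = (Mc ^ j).mulVec (v m) := by
    intro m j
    induction j with
    | zero => simp [Matrix.one_mulVec]
    | succ j ih =>
        rw [← Nat.add_assoc, hvstep (m + j), ih, pow_succ']
        rw [← Matrix.mulVec_mulVec]
  -- Cayley-Hamilton over ℤ
  set d : ℕ := Fintype.card (Fin k → F) with hd
  have hd1 : 1 ≤ d := Fintype.card_pos
  set c : ℕ → ℤ := fun i => - Mz.charpoly.coeff i with hc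
  have hCH : Mz ^ d = ∑ i ∈ Finset.range d, c i • Mz ^ i := by
    have h0 := Matrix.aeval_self_charpoly Mz
    rw [Polynomial.aeval_eq_sum_range] at h0
    have hdeg : Mz.charpoly.natDegree = d := Matrix.charpoly_natDegree_eq_dim Mz
    have h1 : Mz.charpoly.coeff d = 1 := by
      rw [← hdeg]; exact Mz.charpoly_monic.coeff_natDegree
    rw [hdeg, Finset.sum_range_succ, h1, one_smul] at h0
    rw [eq_neg_of_add_eq_zero_right h0, ← Finset.sum_neg_distrib]
    exact Finset.sum_congr rfl fun i _ => (neg_smul _ _).symm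
  have hCHc : Mc ^ d = ∑ i ∈ Finset.range d, (c i : ℂ) • Mc ^ i := by
    have hMcf : Mc = (Int.castRingHom ℂ).mapMatrix Mz := rfl
    rw [hMcf, ← map_pow, hCH, map_sum]
    refine Finset.sum_congr rfl fun i _ => ?_
    rw [map_zsmul, map_pow, Int.cast_smul_eq_zsmul]
  -- recurrence for v
  have hvrec : ∀ m : ℕ, ∀ s, v (m + d) s = ∑ i ∈ Finset.range d, (c i : ℂ) * v (m + i) s := by
    intro m s
    have h2 : v (m + d) = (∑ i ∈ Finset.range d, (c i : ℂ) • Mc ^ i).mulVec (v m) := by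
      rw [hvpow, hCHc]
    rw [h2]
    have h3 : ((∑ i ∈ Finset.range d, (c i : ℂ) • Mc ^ i).mulVec (v m)) s
        = ∑ t, (∑ i ∈ Finset.range d, ((c i : ℂ) • Mc ^ i) s t) * v m t := by
      simp [Matrix.mulVec, dotProduct, Matrix.sum_apply]
    rw [h3]
    simp_rw [Finset.sum_mul]
    rw [Finset.sum_comm]
    refine Finset.sum_congr rfl fun i _ => ?_
    rw [hvpow]
    show _ = (c i : ℂ) * ∑ t, (Mc ^ i) s t * v m t
    rw [Finset.mul_sum]
    refine Finset.sum_congr rfl fun t _ => ?_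
    simp [Matrix.smul_apply]
    ring
  -- the weight function
  have hidx : ∀ j : ℕ, k - 1 - j < k := fun j =>
    lt_of_le_of_lt (Nat.sub_le _ _) (Nat.sub_lt (by omega) one_pos)
  set w : (Fin k → F) → ℂ := fun s =>
    Complex.exp (2 * Real.pi * Complex.I *
      ((Algebra.trace (ZMod p) F (∑ j ∈ Finset.range k, β j * s ⟨k - 1 - j, hidx j⟩)).val : ℂ) / p)
    with hw
  have hA : ∀ n : ℕ,
      expSumGF p F n (fun x => ∑ j ∈ Finset.range k, β j * esymFun (k - j) n x)
        = ∑ s : Fin k → F, w s * v n s := by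
    intro n
    rw [expSumGF]
    simp_rw [hv, Finset.mul_sum, mul_ite, mul_one, mul_zero]
    rw [Finset.sum_comm]
    refine Finset.sum_congr rfl fun x _ => ?_
    rw [Finset.sum_ite_eq (Finset.univ) (st n x) w]
    simp only [Finset.mem_univ, if_true]
    simp only [hw]
    have harg : (∑ j ∈ Finset.range k, β j * st n x ⟨k - 1 - j, hidx j⟩)
        = ∑ j ∈ Finset.range k, β j * esymFun (k - j) n x := by
      refine Finset.sum_congr rfl fun j hj => ?_
      rw [Finset.mem_range] at hj
      congr 1
      show esymFun (k - 1 - j + 1) n x = _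
      congr 1
      omega
    rw [harg]
  -- conclude
  refine ⟨d, hd1, c, fun n hn => ?_⟩
  obtain ⟨m, rfl⟩ : ∃ m, n = m + d := ⟨n - d, by omega⟩
  have hsub : m + d - d = m := by omega
  rw [hA, hsub]
  calc ∑ s : Fin k → F, w s * v (m + d) s
      = ∑ s : Fin k → F, ∑ i ∈ Finset.range d, (c i : ℂ) * (w s * v (m + i) s) := by
        refine Finset.sum_congr rfl fun s _ => ?_
        rw [hvrec m s, Finset.mul_sum]
        exact Finset.sum_congr rfl fun i _ => by ring
    _ = ∑ i ∈ Finset.range d, (c i : ℂ) * ∑ s : Fin k → F, w s * v (m + i) s := by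
        rw [Finset.sum_comm]
        exact Finset.sum_congr rfl fun i _ => by rw [Finset.mul_sum]
    _ = _ := Finset.sum_congr rfl fun i _ => by rw [← hA]
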